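/- Let V be a 2k-dimensional real vector space with almost complex structure J, and let ω₁, …, ω_g : V → ℂ be ℝ-linear maps of type (1,0), pairwise satisfying ωᵢ ∧ ωⱼ = 0, and not all zero. Then the common kernel ⋂ᵢ ker ωᵢ has real codimension exactly 2 in V. -/

import Mathlib

/-!
Pick `i₀` with `ω i₀ ≠ 0` and `u` with `ω i₀ u ≠ 0`. The wedge relation
`ω i u * ω i₀ v = ω i v * ω i₀ u` shows that `ω i₀ v = 0` forces `ω i v = 0`, so the common
kernel is `ker ω i₀`. Being of type `(1,0)`, `ω i₀` takes both values `ω i₀ u` and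
`I * ω i₀ u` on the real subspace spanned by `u, J u`; these span `ℂ` over `ℝ`, so `ω i₀` is
onto and its kernel has codimension `dim_ℝ ℂ = 2`.
-/

theorem iInf_ker_eq_ker_of_mul_comm {R M A ι : Type*} [Semiring R] [AddCommMonoid M]
    [Module R M] [CommRing A] [NoZeroDivisors A] [Module R A] (ω : ι → M →ₗ[R] A)
    (hwedge : ∀ i j, ∀ u v, ω i u * ω j v = ω i v * ω j u) {i₀ : ι} (hi₀ : ω i₀ ≠ 0) :
    ⨅ i, LinearMap.ker (ω i) = LinearMap.ker (ω i₀) := by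
  obtain ⟨u, hu⟩ : ∃ u, ω i₀ u ≠ 0 := by
    by_contra! h
    exact hi₀ (LinearMap.ext h)
  refine le_antisymm (iInf_le _ i₀) fun v hv => Submodule.mem_iInf _ |>.mpr fun i => ?_
  have h := hwedge i i₀ u v
  rw [LinearMap.mem_ker.mp hv, mul_zero, eq_comm, mul_eq_zero] at h
  exact h.resolve_right hu

theorem surjective_of_map_apply_eq_I_mul {V : Type*} [AddCommGroup V] [Module ℝ V]
    (J : V →ₗ[ℝ] V) (f : V →ₗ[ℝ] ℂ) (hf : ∀ v, f (J v) = Complex.I * f v) (hne : f ≠ 0) :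
    Function.Surjective f := by
  obtain ⟨u, hu⟩ : ∃ u, f u ≠ 0 := by
    by_contra! h
    exact hne (LinearMap.ext h)
  intro w
  refine ⟨(w / f u).re • u + (w / f u).im • J u, ?_⟩
  rw [map_add, map_smul, map_smul, hf, Complex.real_smul, Complex.real_smul]
  calc ((w / f u).re : ℂ) * f u + (w / f u).im * (Complex.I * f u)
      = ((w / f u).re + (w / f u).im * Complex.I) * f u := by ring
    _ = w := by rw [Complex.re_add_im, div_mul_cancel₀ _ hu]

theorem finrank_eq_finrank_ker_add_two {V : Type*} [AddCommGroup V] [Module ℝ V]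
    [FiniteDimensional ℝ V] {f : V →ₗ[ℝ] ℂ} (hf : Function.Surjective f) :
    Module.finrank ℝ V = Module.finrank ℝ (LinearMap.ker f) + 2 := by
  rw [← LinearMap.finrank_range_add_finrank_ker f, LinearMap.range_eq_top.mpr hf, finrank_top,
    Complex.finrank_real_complex, add_comm]

theorem common_kernel_codim_two_general
    {V : Type*} [AddCommGroup V] [Module ℝ V] [FiniteDimensional ℝ V]
    (g : ℕ)
    (J : V →ₗ[ℝ] V)
    (ω : Fin g → (V →ₗ[ℝ] ℂ))
    (hω : ∀ i, ∀ v, ω i (J v) = Complex.I * ω i v)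
    (hwedge : ∀ i j, ∀ u v, ω i u * ω j v = ω i v * ω j u)
    (hne : ∃ i, ω i ≠ 0) :
    Module.finrank ℝ V = Module.finrank ℝ (⨅ i, LinearMap.ker (ω i) : Submodule ℝ V) + 2 := by
  obtain ⟨i₀, hi₀⟩ := hne
  rw [iInf_ker_eq_ker_of_mul_comm ω hwedge hi₀]
  exact finrank_eq_finrank_ker_add_two (surjective_of_map_apply_eq_I_mul J (ω i₀) (hω i₀) hi₀)

/-- On a `2k`-dimensional real vector space with almost complex structure `J`, a family
of type-`(1,0)` forms with pairwise vanishing wedges, not all zero, has common kernel of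
real codimension exactly two. -/
theorem common_kernel_codim_two
    {V : Type*} [AddCommGroup V] [Module ℝ V] [FiniteDimensional ℝ V]
    (k g : ℕ) (hdim : Module.finrank ℝ V = 2 * k)
    (J : V →ₗ[ℝ] V) (hJ : J ∘ₗ J = -LinearMap.id)
    (ω : Fin g → (V →ₗ[ℝ] ℂ))
    (hω : ∀ i, ∀ v, ω i (J v) = Complex.I * ω i v)
    (hwedge : ∀ i j, ∀ u v, ω i u * ω j v = ω i v * ω j u)
    (hne : ∃ i, ω i ≠ 0) :
    Module.finrank ℝ V = Module.finrank ℝ (⨅ i, LinearMap.ker (ω i) : Submodule ℝ V) + 2 :=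
  common_kernel_codim_two_general g J ω hω hwedge hne
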